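/- arXiv:1604.00774 — 2 statements merged into one kernel-verified Lean document; each statement's English description precedes it below -/
import Mathlib

section
/- Let β ∈ (0,1], ρ > 0, and z ∈ ℂ with Re(1/z) ≥ ρ (and z ≠ 0). Then Re(z^(−β)) ≥ ρ^β, where z^(−β) is defined using the principal branch of the logarithm. -/
/-!
Put `w = 1/z`, so that `z^(-β) = w^β` and `Re w ≥ ρ`. Writing `w = r e^{iθ}` with `|θ| ≤ π/2`,
`Re (w^β) = r^β cos (βθ)` and `(Re w)^β = r^β (cos θ)^β`, so everything reduces to
`(cos θ)^β ≤ cos (βθ)`. This follows by comparing both sides with `β cos θ + (1 - β) cos 0`: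
weighted AM-GM bounds the left side by it, and concavity of `cos` on `[-π/2, π/2]` bounds it by
the right side.
-/

open Real Set

theorem Real.cos_rpow_le_cos_mul {β θ : ℝ} (hβ0 : 0 ≤ β) (hβ1 : β ≤ 1)
    (hθ : θ ∈ Icc (-(π / 2)) (π / 2)) : cos θ ^ β ≤ cos (β * θ) := by
  have hzero : (0 : ℝ) ∈ Icc (-(π / 2)) (π / 2) := ⟨by linarith [pi_pos], by linarith [pi_pos]⟩
  calc cos θ ^ β = cos θ ^ β * 1 ^ (1 - β) := by rw [one_rpow, mul_one]
    _ ≤ β * cos θ + (1 - β) * 1 :=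
      geom_mean_le_arith_mean2_weighted hβ0 (sub_nonneg.2 hβ1) (cos_nonneg_of_mem_Icc hθ)
        zero_le_one (by ring)
    _ = β * cos θ + (1 - β) * cos 0 := by rw [cos_zero]
    _ ≤ cos (β * θ + (1 - β) * 0) :=
      strictConcaveOn_cos_Icc.concaveOn.2 hθ hzero hβ0 (sub_nonneg.2 hβ1) (by ring)
    _ = cos (β * θ) := by rw [mul_zero, add_zero]

theorem Complex.re_rpow_le_re_cpow {w : ℂ} (hw : 0 ≤ w.re) {β : ℝ} (hβ0 : 0 ≤ β)
    (hβ1 : β ≤ 1) : w.re ^ β ≤ (w ^ (β : ℂ)).re := by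
  have harg : arg w ∈ Icc (-(π / 2)) (π / 2) := abs_le.1 (abs_arg_le_pi_div_two_iff.2 hw)
  calc w.re ^ β = (‖w‖ * Real.cos (arg w)) ^ β := by rw [norm_mul_cos_arg]
    _ = ‖w‖ ^ β * Real.cos (arg w) ^ β := mul_rpow (norm_nonneg w) (cos_nonneg_of_mem_Icc harg)
    _ ≤ ‖w‖ ^ β * Real.cos (β * arg w) := by gcongr; exact cos_rpow_le_cos_mul hβ0 hβ1 harg
    _ = (w ^ (β : ℂ)).re := by rw [cpow_ofReal_re, mul_comm β]

open Complex in
theorem re_cpow_neg_ge_general (β ρ : ℝ) (hβ : β ∈ Set.Ioc (0:ℝ) 1) (hρ : 0 < ρ)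
    (z : ℂ) (hre : ρ ≤ (1 / z).re) :
    ρ ^ β ≤ (z ^ (-(β : ℂ))).re := by
  rw [one_div] at hre
  have harg : arg z ≠ π := by
    rw [Ne, arg_eq_pi_iff]
    rintro ⟨hz, -⟩
    have : z.re / normSq z ≤ 0 := div_nonpos_of_nonpos_of_nonneg hz.le (normSq_nonneg z)
    linarith [inv_re z]
  calc ρ ^ β ≤ z⁻¹.re ^ β := rpow_le_rpow hρ.le hre hβ.1.le
    _ ≤ (z⁻¹ ^ (β : ℂ)).re := re_rpow_le_re_cpow (hρ.le.trans hre) hβ.1.le hβ.2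
    _ = (z ^ (-(β : ℂ))).re := by rw [inv_cpow _ _ harg, cpow_neg]

/-- If `Re(1/z) ≥ ρ > 0` and `β ∈ (0,1]`, then `Re(z^(−β)) ≥ ρ^β`
(principal branch). -/
theorem re_cpow_neg_ge (β ρ : ℝ) (hβ : β ∈ Set.Ioc (0:ℝ) 1) (hρ : 0 < ρ)
    (z : ℂ) (hz : z ≠ 0) (hre : ρ ≤ (1 / z).re) :
    ρ ^ β ≤ (z ^ (-(β : ℂ))).re :=
  re_cpow_neg_ge_general β ρ hβ hρ z hre
end

section
/- Let H be a complex Hilbert space, ν > 0, and let m be the multiplication-by-ξ operator on L²(ℝ,H). Then the spectrum of the bounded operator (im+ν)⁻¹ equals the circle ∂B(r,r) = {z ∈ ℂ : |z − r| = r} with r = 1/(2ν). -/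
/-!
A bounded operator on `Lᵖ` that multiplies by a continuous function `φ` has spectrum
`closure (range φ)`: off the closure, multiplication by the bounded function `(z - φ)⁻¹` inverts
`z - T`; on it, indicators of small sets of positive measure where `φ` stays close to `z` are
approximate eigenvectors, so `z - T` is not bounded below. For `φ ξ = (iξ + ν)⁻¹` one has
`re (φ ξ)⁻¹ = ν`, which says exactly that `φ ξ` lies on the circle `|z - r| = r`; the range is the
circle minus `0`, and `0` is recovered in the closure as the limit at `ξ → ∞`.
-/

open MeasureTheory Filter Topology Set Metric Complex
open scoped ENNReal

theorem ContinuousLinearMap.not_isUnit_of_forall_exists_norm_apply_le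
    {𝕜 F : Type*} [NontriviallyNormedField 𝕜] [NormedAddCommGroup F] [NormedSpace 𝕜 F]
    (A : F →L[𝕜] F) (h : ∀ ε > 0, ∃ f ≠ 0, ‖A f‖ ≤ ε * ‖f‖) : ¬IsUnit A := by
  rintro ⟨u, hu⟩
  set R : F →L[𝕜] F := ↑u⁻¹
  obtain ⟨f, hf, hAf⟩ := h (‖R‖ + 1)⁻¹ (by positivity)
  have hRA : R (A f) = f := by rw [← hu]; exact congr($(u.inv_mul) f)
  have hf_pos : 0 < ‖f‖ := norm_pos_iff.mpr hf
  refine lt_irrefl ‖f‖ ?_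
  calc ‖f‖ = ‖R (A f)‖ := by rw [hRA]
    _ ≤ ‖R‖ * ‖A f‖ := R.le_opNorm _
    _ ≤ ‖R‖ * ((‖R‖ + 1)⁻¹ * ‖f‖) := by gcongr
    _ = ‖R‖ / (‖R‖ + 1) * ‖f‖ := by ring
    _ < 1 * ‖f‖ := by gcongr; rw [div_lt_one (by positivity)]; linarith
    _ = ‖f‖ := one_mul _

namespace MeasureTheory

variable {α 𝕜 : Type*} [MeasurableSpace α] [TopologicalSpace α] [OpensMeasurableSpace α]
  {μ : Measure α} [μ.IsOpenPosMeasure] [IsLocallyFiniteMeasure μ] [NormedField 𝕜]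

theorem exists_measurableSet_norm_sub_le_of_mem_closure_range {φ : α → 𝕜} (hφ : Continuous φ)
    {z : 𝕜} (hz : z ∈ closure (range φ)) {ε : ℝ} (hε : 0 < ε) :
    ∃ s, MeasurableSet s ∧ μ s ≠ 0 ∧ μ s ≠ ∞ ∧ ∀ x ∈ s, ‖z - φ x‖ ≤ ε := by
  obtain ⟨_, ⟨x₀, rfl⟩, hx₀⟩ := Metric.mem_closure_iff.mp hz ε hε
  obtain ⟨V, hx₀V, hV, hμV⟩ := μ.exists_isOpen_measure_lt_top x₀
  set U := φ ⁻¹' ball z ε ∩ V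
  have hU : IsOpen U := (isOpen_ball.preimage hφ).inter hV
  refine ⟨U, hU.measurableSet, hU.measure_ne_zero μ ⟨x₀, ?_, hx₀V⟩,
    (measure_mono inter_subset_right |>.trans_lt hμV).ne, fun x hx ↦ ?_⟩
  · rwa [mem_preimage, mem_ball, dist_comm]
  · rw [← dist_eq_norm, dist_comm]
    exact (mem_ball.mp hx.1).le

end MeasureTheory

namespace MeasureTheory.Lp

variable {α 𝕜 E : Type*} [MeasurableSpace α] {μ : Measure α} [NontriviallyNormedField 𝕜]
  [NormedAddCommGroup E] [NormedSpace 𝕜 E] {p : ℝ≥0∞} [Fact (1 ≤ p)]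

theorem exists_clm_ae_eq_smul {ψ : α → 𝕜} (hψ : AEStronglyMeasurable ψ μ) (C : ℝ)
    (hC : ∀ᵐ x ∂μ, ‖ψ x‖ ≤ C) :
    ∃ S : Lp E p μ →L[𝕜] Lp E p μ, ∀ f, S f =ᵐ[μ] fun x ↦ ψ x • f x := by
  set g := (memLp_top_of_bound hψ C hC).toLp ψ
  refine ⟨(ContinuousLinearMap.lsmul 𝕜 𝕜).holderL μ ∞ p p g, fun f ↦ ?_⟩
  filter_upwards [(ContinuousLinearMap.lsmul 𝕜 𝕜).coeFn_holder (r := p) g f,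
    MemLp.coeFn_toLp (memLp_top_of_bound hψ C hC)] with x hx hg
  simp [hx, hg, g]

theorem clm_mul_eq_one_of_ae_eq_smul {A S : Lp E p μ →L[𝕜] Lp E p μ} {a b : α → 𝕜}
    (hA : ∀ f, A f =ᵐ[μ] fun x ↦ a x • f x) (hS : ∀ f, S f =ᵐ[μ] fun x ↦ b x • f x)
    (hab : ∀ᵐ x ∂μ, a x * b x = 1) : A * S = 1 := by
  ext1 f
  apply Lp.ext
  filter_upwards [hA (S f), hS f, hab] with x hAx hSx habx
  rw [one_apply_eq_self, mul_apply_eq_comp, hAx, hSx, smul_smul, habx, one_smul]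

variable {T : Lp E p μ →L[𝕜] Lp E p μ} {φ : α → 𝕜}

theorem algebraMap_sub_apply_ae_eq_smul (hT : ∀ f, ∀ᵐ x ∂μ, T f x = φ x • f x) (z : 𝕜)
    (f : Lp E p μ) :
    (algebraMap 𝕜 (Lp E p μ →L[𝕜] Lp E p μ) z - T) f =ᵐ[μ] fun x ↦ (z - φ x) • f x := by
  rw [show (algebraMap 𝕜 _ z - T) f = z • f - T f by simp [Algebra.algebraMap_eq_smul_one]]
  filter_upwards [Lp.coeFn_sub (z • f) (T f), Lp.coeFn_smul z f, hT f] with x hsub hsmul hTx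
  rw [hsub, Pi.sub_apply, hsmul, hTx, Pi.smul_apply, sub_smul]

theorem notMem_spectrum_of_ae_le_norm_sub (hφ : AEStronglyMeasurable φ μ)
    (hT : ∀ f, ∀ᵐ x ∂μ, T f x = φ x • f x) {z : 𝕜} {d : ℝ} (hd : 0 < d)
    (hz : ∀ᵐ x ∂μ, d ≤ ‖z - φ x‖) : z ∉ spectrum 𝕜 T := by
  have hψ : AEStronglyMeasurable (fun x ↦ (z - φ x)⁻¹) μ :=
    (aestronglyMeasurable_const.sub hφ).inv₀
  obtain ⟨S, hS⟩ := exists_clm_ae_eq_smul (E := E) (p := p) hψ d⁻¹ <| by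
    filter_upwards [hz] with x hx
    rw [norm_inv]
    exact inv_anti₀ hd hx
  have hne : ∀ᵐ x ∂μ, z - φ x ≠ 0 := by
    filter_upwards [hz] with x hx
    exact norm_pos_iff.mp (hd.trans_le hx)
  have hA := algebraMap_sub_apply_ae_eq_smul hT z
  rw [spectrum.notMem_iff]
  refine ⟨⟨_, S, clm_mul_eq_one_of_ae_eq_smul hA hS ?_, clm_mul_eq_one_of_ae_eq_smul hS hA ?_⟩,
    rfl⟩
  · filter_upwards [hne] with x hx using mul_inv_cancel₀ hx
  · filter_upwards [hne] with x hx using inv_mul_cancel₀ hx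

theorem mem_spectrum_of_forall_exists_norm_sub_le [Nontrivial E]
    (hT : ∀ f, ∀ᵐ x ∂μ, T f x = φ x • f x) {z : 𝕜}
    (hz : ∀ ε > 0, ∃ s, MeasurableSet s ∧ μ s ≠ 0 ∧ μ s ≠ ∞ ∧ ∀ x ∈ s, ‖z - φ x‖ ≤ ε) :
    z ∈ spectrum 𝕜 T := by
  refine spectrum.mem_iff.mpr <| ContinuousLinearMap.not_isUnit_of_forall_exists_norm_apply_le _
    fun ε hε ↦ ?_
  obtain ⟨s, hs, hμs₀, hμs, hφs⟩ := hz ε hε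
  obtain ⟨v, hv⟩ := exists_ne (0 : E)
  set f := indicatorConstLp p hs hμs v
  have hp : p ≠ 0 := (zero_lt_one.trans_le Fact.out).ne'
  refine ⟨f, ?_, Lp.norm_le_mul_norm_of_ae_le_mul ?_⟩
  · rw [← norm_pos_iff, norm_indicatorConstLp' hp hμs₀]
    have : 0 < μ.real s := ENNReal.toReal_pos hμs₀ hμs
    positivity
  · filter_upwards [algebraMap_sub_apply_ae_eq_smul hT z f,
      indicatorConstLp_coeFn_notMem (p := p) (hs := hs) (hμs := hμs) (c := v)] with x hx hf
    rw [hx, norm_smul]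
    by_cases hxs : x ∈ s
    · gcongr
      exact hφs x hxs
    · rw [hf hxs]
      simp

theorem spectrum_eq_closure_range_of_ae_eq_smul [TopologicalSpace α] [OpensMeasurableSpace α]
    [μ.IsOpenPosMeasure] [IsLocallyFiniteMeasure μ] [SecondCountableTopologyEither α 𝕜]
    [Nontrivial E] (hφ : Continuous φ) (hT : ∀ f, ∀ᵐ x ∂μ, T f x = φ x • f x) :
    spectrum 𝕜 T = closure (range φ) := by
  ext z
  refine ⟨fun hzT ↦ ?_, fun hz ↦ mem_spectrum_of_forall_exists_norm_sub_le hT fun ε hε ↦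
    exists_measurableSet_norm_sub_le_of_mem_closure_range hφ hz hε⟩
  by_contra hz
  obtain ⟨d, hd, hzd⟩ : ∃ d > 0, ∀ x, d ≤ ‖z - φ x‖ := by
    simpa [Metric.mem_closure_iff, _root_.dist_eq_norm] using hz
  exact notMem_spectrum_of_ae_le_norm_sub hφ.aestronglyMeasurable hT hd (.of_forall hzd) hzT

end MeasureTheory.Lp

theorem Complex.inv_mem_sphere_iff_re_eq {w : ℂ} (hw : w ≠ 0) {ν : ℝ} (hν : 0 < ν) :
    w⁻¹ ∈ sphere ((1 / (2 * ν) : ℝ) : ℂ) (1 / (2 * ν)) ↔ w.re = ν := by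
  set c : ℝ := 1 / (2 * ν)
  have hc : 0 < c := by positivity
  have hcν : 2 * c * ν = 1 := by simp only [c]; field_simp
  clear_value c
  have hdiv : w⁻¹ - c = (1 - c * w) / w := by field_simp
  rw [mem_sphere_iff_norm, hdiv, norm_div, div_eq_iff (norm_ne_zero_iff.mpr hw),
    ← sq_eq_sq₀ (norm_nonneg _) (mul_nonneg hc.le (norm_nonneg _)), mul_pow, Complex.sq_norm,
    Complex.sq_norm, normSq_apply, normSq_apply]
  simp only [sub_re, one_re, mul_re, ofReal_re, ofReal_im, zero_mul, sub_zero, sub_im, one_im,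
    mul_im, zero_sub, add_zero]
  constructor
  · intro h
    exact mul_left_cancel₀ (by positivity : 2 * c ≠ 0) (by linear_combination -h - hcν)
  · intro h
    linear_combination (-2 * c) * h - hcν

theorem Complex.tendsto_inv_I_mul_add_atTop (ν : ℝ) :
    Tendsto (fun ξ : ℝ ↦ (I * ξ + ν)⁻¹) atTop (𝓝 0) := by
  refine tendsto_inv₀_cobounded.comp <| tendsto_norm_atTop_iff_cobounded.mp <|
    tendsto_atTop_mono (fun ξ ↦ ?_) tendsto_id
  calc ξ ≤ |(I * ξ + ν).im| := by simpa using le_abs_self ξ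
    _ ≤ ‖I * ξ + ν‖ := abs_im_le_norm _

theorem Complex.I_mul_add_ne_zero {ν : ℝ} (hν : ν ≠ 0) (ξ : ℝ) : I * ξ + ν ≠ 0 :=
  fun h ↦ hν <| by simpa using congr_arg re h

theorem Complex.closure_range_inv_I_mul_add {ν : ℝ} (hν : 0 < ν) :
    closure (range fun ξ : ℝ ↦ (I * ξ + ν)⁻¹) = sphere ((1 / (2 * ν) : ℝ) : ℂ) (1 / (2 * ν)) := by
  have hne := I_mul_add_ne_zero hν.ne'
  have hrange : range (fun ξ : ℝ ↦ (I * ξ + ν)⁻¹) =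
      sphere ((1 / (2 * ν) : ℝ) : ℂ) (1 / (2 * ν)) \ {0} := by
    ext z
    constructor
    · rintro ⟨ξ, rfl⟩
      exact ⟨(inv_mem_sphere_iff_re_eq (hne ξ) hν).mpr (by simp), inv_ne_zero (hne ξ)⟩
    · rintro ⟨hz, hz0 : z ≠ 0⟩
      have hre : z⁻¹.re = ν :=
        (inv_mem_sphere_iff_re_eq (inv_ne_zero hz0) hν).mp (by rwa [inv_inv])
      refine ⟨z⁻¹.im, inv_eq_iff_eq_inv.mpr (Complex.ext ?_ ?_)⟩ <;> simp [hre]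
  refine (closure_minimal (hrange ▸ sdiff_subset) isClosed_sphere).antisymm fun z hz ↦ ?_
  obtain rfl | hz0 := eq_or_ne z 0
  · exact mem_closure_of_tendsto (tendsto_inv_I_mul_add_atTop ν) (.of_forall (mem_range_self ·))
  · exact subset_closure (hrange ▸ ⟨hz, hz0⟩)

theorem spectrum_inv_im_add_nu_general
    {H : Type*} [NormedAddCommGroup H] [InnerProductSpace ℂ H]
    [Nontrivial H] (ν : ℝ) (hν : 0 < ν)
    (T : Lp H 2 (volume : Measure ℝ) →L[ℂ] Lp H 2 (volume : Measure ℝ))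
    (hT : ∀ f : Lp H 2 (volume : Measure ℝ), ∀ᵐ ξ : ℝ ∂volume,
      ((T f : ℝ → H) ξ) = (Complex.I * (ξ : ℂ) + (ν : ℂ))⁻¹ • ((f : ℝ → H) ξ)) :
    spectrum ℂ T = Metric.sphere ((1 / (2 * ν) : ℝ) : ℂ) (1 / (2 * ν)) := by
  have hφ : Continuous fun ξ : ℝ ↦ (I * ξ + ν)⁻¹ :=
    (continuous_const.mul continuous_ofReal |>.add continuous_const).inv₀
      (I_mul_add_ne_zero hν.ne')
  rw [Lp.spectrum_eq_closure_range_of_ae_eq_smul hφ hT, closure_range_inv_I_mul_add hν]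

/-- The spectrum of the bounded multiplication operator `(im + ν)⁻¹` on `L²(ℝ,H)`
(multiplication by `ξ ↦ (iξ + ν)⁻¹`) equals the circle `∂B(r,r)` with `r = 1/(2ν)`. -/
theorem spectrum_inv_im_add_nu
    {H : Type*} [NormedAddCommGroup H] [InnerProductSpace ℂ H] [CompleteSpace H]
    [Nontrivial H] (ν : ℝ) (hν : 0 < ν)
    (T : Lp H 2 (volume : Measure ℝ) →L[ℂ] Lp H 2 (volume : Measure ℝ))
    (hT : ∀ f : Lp H 2 (volume : Measure ℝ), ∀ᵐ ξ : ℝ ∂volume,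
      ((T f : ℝ → H) ξ) = (Complex.I * (ξ : ℂ) + (ν : ℂ))⁻¹ • ((f : ℝ → H) ξ)) :
    spectrum ℂ T = Metric.sphere ((1 / (2 * ν) : ℝ) : ℂ) (1 / (2 * ν)) :=
  spectrum_inv_im_add_nu_general ν hν T hT
end
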